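/- arXiv:1502.05967 — 3 statements merged into one kernel-verified Lean document; each statement's English description precedes it below -/
import Mathlib

section
/- Let (Ω, S, μ) be a finite measure space and F a measurable function. Suppose there are constants C > 0, r > 0 and an integer p_0 > 0 such that ‖F‖_{L^p(μ)} ≤ C p^r for every p ≥ p_0. Then for every 0 < δ < r e^{-1} there exists L = L(r, δ, p_0, μ(Ω)) < ∞ such that ∫_Ω exp[ δ (|F|/C)^{1/r} ] dμ ≤ L. -/
open MeasureTheory Real ENNReal

/-!
Put `G = (|F| / C) ^ (1 / r)` and expand `exp (δ G) = ∑ δⁿ Gⁿ / n!`. The `n`-th moment of `G` is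
the `(n / r)`-th moment of `|F| / C`: when `n / r ≥ p₀` the hypothesis bounds it by
`(n / r) ^ n`, and otherwise it is dominated by `μ Ω` plus the `p₀`-th moment. Since
`nⁿ / n! ≤ eⁿ`, the series is then dominated by `e^δ (μ Ω + p₀ ^ (r p₀)) + ∑ (δ e / r)ⁿ`,
which converges because `δ < r / e`.
-/

lemma ENNReal.tsum_ofReal_pow_div_factorial {x : ℝ} (hx : 0 ≤ x) :
    ∑' n : ℕ, ENNReal.ofReal (x ^ n / n.factorial) = ENNReal.ofReal (exp x) := by
  rw [← ENNReal.ofReal_tsum_of_nonneg (fun n => by positivity) (summable_pow_div_factorial x),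
    exp_eq_exp_ℝ, NormedSpace.exp_eq_tsum_div]

lemma Real.pow_div_factorial_mul_div_pow_le {δ r : ℝ} (hδ : 0 ≤ δ) (hr : 0 ≤ r) (n : ℕ) :
    δ ^ n / n.factorial * ((n : ℝ) / r) ^ n ≤ (δ * exp 1 / r) ^ n :=
  calc δ ^ n / n.factorial * ((n : ℝ) / r) ^ n
      = (δ / r) ^ n * ((n : ℝ) ^ n / n.factorial) := by rw [div_pow, div_pow]; ring
    _ ≤ (δ / r) ^ n * exp 1 ^ n := by
        rw [← exp_nat_mul, mul_one]
        gcongr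
        exact pow_div_factorial_le_exp _ n.cast_nonneg n
    _ = (δ * exp 1 / r) ^ n := by rw [← mul_pow, div_mul_eq_mul_div]

lemma Real.rpow_le_one_add_rpow {x a b : ℝ} (hx : 0 ≤ x) (ha : 0 ≤ a) (hab : a ≤ b) :
    x ^ a ≤ 1 + x ^ b := by
  rcases le_or_gt x 1 with h | h
  · exact (rpow_le_one hx h ha).trans (le_add_of_nonneg_right (rpow_nonneg hx b))
  · exact (rpow_le_rpow_of_exponent_le h.le hab).trans (le_add_of_nonneg_left zero_le_one)

namespace MeasureTheory

variable {Ω : Type*} [MeasurableSpace Ω] {μ : Measure Ω}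

lemma lintegral_ofReal_exp_mul_eq_tsum {g : Ω → ℝ} (hg : AEMeasurable g μ)
    (hg0 : ∀ ω, 0 ≤ g ω) {c : ℝ} (hc : 0 ≤ c) :
    ∫⁻ ω, ENNReal.ofReal (exp (c * g ω)) ∂μ =
      ∑' n : ℕ, ENNReal.ofReal (c ^ n / n.factorial) * ∫⁻ ω, ENNReal.ofReal (g ω ^ n) ∂μ := by
  have hterm : ∀ n : ℕ, ∀ ω, ENNReal.ofReal ((c * g ω) ^ n / n.factorial) =
      ENNReal.ofReal (c ^ n / n.factorial) * ENNReal.ofReal (g ω ^ n) := fun n ω => by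
    rw [← ENNReal.ofReal_mul (by positivity), mul_pow, mul_div_right_comm]
  simp_rw [← ENNReal.tsum_ofReal_pow_div_factorial (mul_nonneg hc (hg0 _)), hterm]
  rw [lintegral_tsum fun n => (hg.pow_const n).ennreal_ofReal.const_mul _]
  simp_rw [lintegral_const_mul' _ _ ENNReal.ofReal_ne_top]

lemma lintegral_ofReal_rpow_le_measure_univ_add {g : Ω → ℝ} (hg0 : ∀ ω, 0 ≤ g ω) {a b : ℝ}
    (ha : 0 ≤ a) (hab : a ≤ b) :
    ∫⁻ ω, ENNReal.ofReal (g ω ^ a) ∂μ ≤ μ Set.univ + ∫⁻ ω, ENNReal.ofReal (g ω ^ b) ∂μ :=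
  calc ∫⁻ ω, ENNReal.ofReal (g ω ^ a) ∂μ ≤ ∫⁻ ω, (1 + ENNReal.ofReal (g ω ^ b)) ∂μ := by
        refine lintegral_mono fun ω => ?_
        rw [← ENNReal.ofReal_one, ← ENNReal.ofReal_add zero_le_one (rpow_nonneg (hg0 ω) _)]
        exact ENNReal.ofReal_le_ofReal (rpow_le_one_add_rpow (hg0 ω) ha hab)
    _ = μ Set.univ + ∫⁻ ω, ENNReal.ofReal (g ω ^ b) ∂μ := by
        rw [lintegral_add_left measurable_const, lintegral_one]

lemma lintegral_ofReal_abs_div_rpow_le {F : Ω → ℝ} {C M p : ℝ} (hC : 0 < C) (hM : 0 ≤ M)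
    (hp : 0 < p)
    (hF : (∫⁻ ω, ENNReal.ofReal (|F ω| ^ p) ∂μ) ^ (1 / p) ≤ ENNReal.ofReal (C * M)) :
    ∫⁻ ω, ENNReal.ofReal ((|F ω| / C) ^ p) ∂μ ≤ ENNReal.ofReal (M ^ p) := by
  have hCp : 0 < C ^ p := rpow_pos_of_pos hC p
  have hmoment : ∫⁻ ω, ENNReal.ofReal (|F ω| ^ p) ∂μ ≤ ENNReal.ofReal (C * M) ^ p := by
    simpa only [← ENNReal.rpow_mul, one_div_mul_cancel hp.ne', ENNReal.rpow_one]
      using ENNReal.rpow_le_rpow hF hp.le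
  calc ∫⁻ ω, ENNReal.ofReal ((|F ω| / C) ^ p) ∂μ
      = (∫⁻ ω, ENNReal.ofReal (|F ω| ^ p) ∂μ) * (ENNReal.ofReal (C ^ p))⁻¹ := by
        rw [← lintegral_mul_const' _ _ (ENNReal.inv_ne_top.2 (ENNReal.ofReal_pos.2 hCp).ne')]
        simp_rw [div_rpow (abs_nonneg _) hC.le, ENNReal.ofReal_div_of_pos hCp, div_eq_mul_inv]
    _ ≤ ENNReal.ofReal (C * M) ^ p * (ENNReal.ofReal (C ^ p))⁻¹ := by gcongr
    _ = ENNReal.ofReal (M ^ p) := by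
        rw [ENNReal.ofReal_rpow_of_nonneg (by positivity) hp.le, mul_rpow hC.le hM,
          ENNReal.ofReal_mul hCp.le, mul_comm (ENNReal.ofReal (C ^ p)), mul_assoc,
          ENNReal.mul_inv_cancel (ENNReal.ofReal_pos.2 hCp).ne' ENNReal.ofReal_ne_top, mul_one]

lemma lintegral_ofReal_pow_le_of_Lp_growth {F : Ω → ℝ} {C r p₀ : ℝ} (hC : 0 < C) (hr : 0 < r)
    (hp₀ : 0 < p₀)
    (hF : ∀ p : ℝ, p₀ ≤ p →
      (∫⁻ ω, ENNReal.ofReal (|F ω| ^ p) ∂μ) ^ (1 / p) ≤ ENNReal.ofReal (C * p ^ r))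
    (n : ℕ) :
    ∫⁻ ω, ENNReal.ofReal (((|F ω| / C) ^ (1 / r)) ^ n) ∂μ ≤
      μ Set.univ + ENNReal.ofReal (p₀ ^ (r * p₀)) + ENNReal.ofReal (((n : ℝ) / r) ^ n) := by
  have hrpow : ∀ ω, ((|F ω| / C) ^ (1 / r)) ^ n = (|F ω| / C) ^ ((n : ℝ) / r) := fun ω => by
    rw [← Real.rpow_natCast, ← rpow_mul (by positivity), one_div_mul_eq_div]
  have hmoment : ∀ p, p₀ ≤ p →
      ∫⁻ ω, ENNReal.ofReal ((|F ω| / C) ^ p) ∂μ ≤ ENNReal.ofReal (p ^ (r * p)) := fun p hp => by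
    rw [rpow_mul (hp₀.trans_le hp).le]
    exact lintegral_ofReal_abs_div_rpow_le hC (rpow_nonneg (hp₀.trans_le hp).le r) (hp₀.trans_le hp)
      (hF p hp)
  simp_rw [hrpow]
  rcases le_or_gt p₀ ((n : ℝ) / r) with hlarge | hsmall
  · calc ∫⁻ ω, ENNReal.ofReal ((|F ω| / C) ^ ((n : ℝ) / r)) ∂μ
        ≤ ENNReal.ofReal (((n : ℝ) / r) ^ (r * ((n : ℝ) / r))) := hmoment _ hlarge
      _ = ENNReal.ofReal (((n : ℝ) / r) ^ n) := by rw [mul_div_cancel₀ _ hr.ne', Real.rpow_natCast]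
      _ ≤ _ := le_add_self
  · calc ∫⁻ ω, ENNReal.ofReal ((|F ω| / C) ^ ((n : ℝ) / r)) ∂μ
        ≤ μ Set.univ + ∫⁻ ω, ENNReal.ofReal ((|F ω| / C) ^ p₀) ∂μ :=
          lintegral_ofReal_rpow_le_measure_univ_add (fun ω => by positivity) (by positivity)
            hsmall.le
      _ ≤ μ Set.univ + ENNReal.ofReal (p₀ ^ (r * p₀)) := by gcongr; exact hmoment p₀ le_rfl
      _ ≤ _ := le_self_add

end MeasureTheory

/-- Lemma 5.1 (after Tzvetkov): if `‖F‖_{L^p(μ)} ≤ C p^r` for all `p ≥ p₀`, then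
`∫ exp(δ (|F|/C)^{1/r}) dμ ≤ L` for every `0 < δ < r/e`, with `L` depending only on
`r`, `δ`, `p₀` and the total mass `V` of the finite measure `μ`. -/
theorem exp_moment_from_Lp_growth (r δ : ℝ) (hr : 0 < r) (hδ0 : 0 < δ)
    (hδ : δ < r * Real.exp (-1)) (p₀ : ℕ) (hp₀ : 0 < p₀) (V : ℝ≥0∞) (hV : V ≠ ∞) :
    ∃ L : ℝ≥0∞, L ≠ ∞ ∧
      ∀ (Ω : Type) (_ : MeasurableSpace Ω) (μ : Measure Ω), μ Set.univ = V →
        ∀ (F : Ω → ℝ), Measurable F →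
          ∀ C : ℝ, 0 < C →
            (∀ p : ℝ, (p₀ : ℝ) ≤ p →
              (∫⁻ ω, ENNReal.ofReal (|F ω| ^ p) ∂μ) ^ (1 / p) ≤
                ENNReal.ofReal (C * p ^ r)) →
            (∫⁻ ω, ENNReal.ofReal (Real.exp (δ * (|F ω| / C) ^ (1 / r))) ∂μ) ≤ L := by
  set q : ℝ := δ * exp 1 / r
  have hq : ENNReal.ofReal q < 1 := by
    rw [ENNReal.ofReal_lt_one, div_lt_one hr, ← lt_mul_inv_iff₀ (exp_pos 1), ← exp_neg]
    exact hδ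
  set K : ℝ≥0∞ := V + ENNReal.ofReal ((p₀ : ℝ) ^ (r * p₀))
  refine ⟨ENNReal.ofReal (exp δ) * K + (1 - ENNReal.ofReal q)⁻¹,
    by finiteness [(tsub_pos_of_lt hq).ne'], ?_⟩
  intro Ω _ μ hμ F hF C hC hLp
  calc ∫⁻ ω, ENNReal.ofReal (exp (δ * (|F ω| / C) ^ (1 / r))) ∂μ
      = ∑' n : ℕ, ENNReal.ofReal (δ ^ n / n.factorial) *
          ∫⁻ ω, ENNReal.ofReal (((|F ω| / C) ^ (1 / r)) ^ n) ∂μ :=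
        lintegral_ofReal_exp_mul_eq_tsum ((hF.abs.div_const C).pow_const _).aemeasurable
          (fun ω => by positivity) hδ0.le
    _ ≤ ∑' n : ℕ, ENNReal.ofReal (δ ^ n / n.factorial) *
          (K + ENNReal.ofReal (((n : ℝ) / r) ^ n)) := by
        gcongr with n
        simpa only [hμ] using
          lintegral_ofReal_pow_le_of_Lp_growth hC hr (by exact_mod_cast hp₀) hLp n
    _ ≤ ∑' n : ℕ, (ENNReal.ofReal (δ ^ n / n.factorial) * K + ENNReal.ofReal q ^ n) := by
        gcongr with n
        rw [mul_add, ← ENNReal.ofReal_mul (by positivity), ← ENNReal.ofReal_pow (by positivity)]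
        gcongr
        exact pow_div_factorial_mul_div_pow_le hδ0.le hr.le n
    _ = ENNReal.ofReal (exp δ) * K + (1 - ENNReal.ofReal q)⁻¹ := by
        rw [ENNReal.tsum_add, ENNReal.tsum_mul_right, ENNReal.tsum_ofReal_pow_div_factorial hδ0.le,
          ENNReal.tsum_geometric]
end

section
/- Let k ≥ 0 and let γ_k be the Gaussian measure on L^2(T) induced by independent complex Gaussian Fourier coefficients ψ_n with variance (1+n^{2k})^{-1}. For every s ≥ k − 1/2, γ_k(Ḣ^s(T)) = 0; more precisely, for every λ > 0, γ_k(‖ψ_N‖_{Ḣ^s} ≤ λ) → 0 as N → ∞. -/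
open MeasureTheory ProbabilityTheory Real
open scoped NNReal ENNReal

/-- The centered complex Gaussian measure on `ℂ` with `E|ψ|² = v`. -/
noncomputable def complexGaussian (v : ℝ≥0) : Measure ℂ :=
  ((gaussianReal 0 (v / 2)).prod (gaussianReal 0 (v / 2))).map
    (fun p => (p.1 : ℂ) + p.2 * Complex.I)

/-- `γ` is the Gaussian measure `γ_k` with covariance `(I + (−Δ)^k)⁻¹`:
independent complex Gaussian Fourier coefficients with `E|ψ_n|² = (1+n^{2k})⁻¹`. -/
def IsGammaK (k : ℕ) (γ : Measure (ℤ → ℂ)) : Prop :=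
  IsProbabilityMeasure γ ∧
    iIndepFun (fun (n : ℤ) (ψ : ℤ → ℂ) => ψ n) γ ∧
    ∀ n : ℤ, γ.map (fun ψ => ψ n) =
      complexGaussian ((1 + (n : ℝ) ^ (2 * k))⁻¹).toNNReal

/-- Squared truncated homogeneous `Ḣ^s` norm: `Σ_{|n|≤N} |n|^{2s} |ψ_n|²`. -/
noncomputable def hsNormTruncSq (s : ℝ) (N : ℕ) (ψ : ℤ → ℂ) : ℝ :=
  ∑ n ∈ Finset.Icc (-(N:ℤ)) N, |(n : ℝ)| ^ (2 * s) * ‖ψ n‖ ^ 2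

/-!
Under `γ_k` the summands `|n|^{2s}|ψ_n|²` are independent, and the Gaussian integral
`E exp(-a|ψ_n|²) = (1 + a E|ψ_n|²)⁻¹` turns Chernoff's bound into
`γ_k(‖ψ_N‖²_{Ḣ^s} ≤ λ²) ≤ e^{λ²} ∏_{|n|≤N} (1 + |n|^{2s}(1+n^{2k})⁻¹)⁻¹`.
For `s ≥ k - 1/2` the factors satisfy `|n|^{2s}(1+n^{2k})⁻¹ ≥ 1/(2|n|)`, so the product is
at most `(1 + ½ Σ_{n≤N} 1/n)⁻¹ → 0`. A summable sequence has all truncated norms below a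
common bound, hence lies in a countable union of sets of measure `0`.
-/

lemma integral_exp_neg_mul_sq_gaussianReal (v : ℝ≥0) {a : ℝ} (ha : 0 ≤ a) :
    ∫ x, exp (-(a * x ^ 2)) ∂gaussianReal 0 v = (√(1 + 2 * a * v))⁻¹ := by
  rcases eq_or_ne v 0 with rfl | hv
  · simp [gaussianReal_zero_var]
  have hv₀ : (0 : ℝ) < v := by positivity
  have hdensity : ∀ x : ℝ, gaussianPDFReal 0 v x * exp (-(a * x ^ 2))
      = (√(2 * π * v))⁻¹ * exp (-(a + (2 * (v : ℝ))⁻¹) * x ^ 2) := by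
    intro x
    rw [gaussianPDFReal, sub_zero, mul_assoc, ← exp_add]
    congr 2
    field_simp
    ring
  rw [integral_gaussianReal_eq_integral_smul hv]
  simp_rw [smul_eq_mul, hdensity]
  rw [integral_const_mul, integral_gaussian, ← sqrt_inv, ← sqrt_inv,
    ← sqrt_mul (by positivity)]
  congr 1
  field_simp
  ring

lemma integral_exp_neg_mul_norm_sq_complexGaussian (v : ℝ≥0) {a : ℝ} (ha : 0 ≤ a) :
    ∫ z, exp (-(a * ‖z‖ ^ 2)) ∂complexGaussian v = (1 + a * v)⁻¹ := by
  have hsplit : ∀ p : ℝ × ℝ, exp (-(a * ‖(p.1 : ℂ) + p.2 * Complex.I‖ ^ 2))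
      = exp (-(a * p.1 ^ 2)) * exp (-(a * p.2 ^ 2)) := by
    intro p
    rw [Complex.norm_add_mul_I, sq_sqrt (by positivity), ← exp_add]
    ring_nf
  rw [complexGaussian, integral_map (by fun_prop) (by fun_prop)]
  simp_rw [hsplit]
  rw [integral_prod_mul (fun x : ℝ => exp (-(a * x ^ 2))) (fun x : ℝ => exp (-(a * x ^ 2))),
    integral_exp_neg_mul_sq_gaussianReal _ ha, NNReal.coe_div, NNReal.coe_two, ← mul_inv,
    mul_self_sqrt (by positivity)]
  ring_nf

lemma one_add_sum_le_prod_one_add {ι R : Type*} [CommSemiring R] [PartialOrder R]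
    [IsOrderedRing R] (s : Finset ι) {f : ι → R} (hf : ∀ i ∈ s, 0 ≤ f i) :
    1 + ∑ i ∈ s, f i ≤ ∏ i ∈ s, (1 + f i) := by
  induction s using Finset.cons_induction with
  | empty => simp
  | cons a s ha ih =>
    have hfa : 0 ≤ f a := hf a (Finset.mem_cons_self a s)
    have hfs : ∀ i ∈ s, 0 ≤ f i := fun i hi => hf i (Finset.mem_cons_of_mem hi)
    rw [Finset.sum_cons, Finset.prod_cons]
    calc 1 + (f a + ∑ i ∈ s, f i)
        ≤ 1 + (f a + ∑ i ∈ s, f i) + f a * ∑ i ∈ s, f i :=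
          le_add_of_nonneg_right (mul_nonneg hfa (Finset.sum_nonneg hfs))
      _ = (1 + f a) * (1 + ∑ i ∈ s, f i) := by ring
      _ ≤ (1 + f a) * ∏ i ∈ s, (1 + f i) :=
          mul_le_mul_of_nonneg_left (ih hfs) (add_nonneg zero_le_one hfa)

lemma sum_range_le_sum_Icc_neg {M : Type*} [AddCommMonoid M] [PartialOrder M]
    [IsOrderedAddMonoid M] {f : ℤ → M} (hf : ∀ n, 0 ≤ f n) (N : ℕ) :
    ∑ i ∈ Finset.range N, f ((i : ℤ) + 1) ≤ ∑ n ∈ Finset.Icc (-(N : ℤ)) N, f n := by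
  rw [← Finset.sum_image (g := fun i : ℕ => (i : ℤ) + 1) (by intro i _ j _ h; simpa using h)]
  refine Finset.sum_le_sum_of_subset_of_nonneg (fun n hn => ?_) fun n _ _ => hf n
  simp only [Finset.mem_image, Finset.mem_range, Finset.mem_Icc] at hn ⊢
  omega

lemma inv_two_mul_le_rpow_mul_inv_one_add_pow {k : ℕ} {s x : ℝ} (hs : (k : ℝ) - 1 / 2 ≤ s)
    (hx : 1 ≤ x) : (2 * x)⁻¹ ≤ x ^ (2 * s) * (1 + x ^ (2 * k))⁻¹ := by
  have hx₀ : 0 < x := by linarith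
  have hpow : 1 ≤ x ^ (2 * k) := one_le_pow₀ hx
  have hrpow : x ^ (2 * k) / x ≤ x ^ (2 * s) := by
    rw [← rpow_natCast, ← rpow_sub_one hx₀.ne']
    exact rpow_le_rpow_of_exponent_le hx (by push_cast; linarith)
  calc (2 * x)⁻¹ = x ^ (2 * k) / x * (2 * x ^ (2 * k))⁻¹ := by field_simp
    _ ≤ x ^ (2 * s) * (1 + x ^ (2 * k))⁻¹ := by gcongr; linarith

/-- The `γ_k`-expectation of the `n`-th summand `|n|^{2s} |ψ_n|²` of `hsNormTruncSq`. -/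
noncomputable def hsWeight (k : ℕ) (s : ℝ) (n : ℤ) : ℝ :=
  |(n : ℝ)| ^ (2 * s) * (1 + (n : ℝ) ^ (2 * k))⁻¹

lemma hsWeight_nonneg (k : ℕ) (s : ℝ) (n : ℤ) : 0 ≤ hsWeight k s n :=
  have := (even_two_mul k).pow_nonneg (n : ℝ)
  mul_nonneg (by positivity) (by positivity)

lemma inv_two_mul_le_hsWeight {k : ℕ} {s : ℝ} (hs : (k : ℝ) - 1 / 2 ≤ s) (i : ℕ) :
    (2 * ((i : ℝ) + 1))⁻¹ ≤ hsWeight k s ((i : ℤ) + 1) := by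
  have hcast : (((i : ℤ) + 1 : ℤ) : ℝ) = (i : ℝ) + 1 := by push_cast; ring
  rw [hsWeight, hcast, abs_of_pos (by positivity)]
  exact inv_two_mul_le_rpow_mul_inv_one_add_pow hs (by simp)

lemma tendsto_prod_inv_one_add_hsWeight {k : ℕ} {s : ℝ} (hs : (k : ℝ) - 1 / 2 ≤ s) :
    Filter.Tendsto (fun N : ℕ => ∏ n ∈ Finset.Icc (-(N : ℤ)) N, (1 + hsWeight k s n)⁻¹)
      Filter.atTop (nhds 0) := by
  have hlower : ∀ N : ℕ, 2⁻¹ * ∑ i ∈ Finset.range N, 1 / ((i : ℝ) + 1)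
      ≤ ∏ n ∈ Finset.Icc (-(N : ℤ)) N, (1 + hsWeight k s n) := fun N =>
    calc 2⁻¹ * ∑ i ∈ Finset.range N, 1 / ((i : ℝ) + 1)
        = ∑ i ∈ Finset.range N, (2 * ((i : ℝ) + 1))⁻¹ := by
          rw [Finset.mul_sum]; simp only [one_div, mul_inv]
      _ ≤ ∑ i ∈ Finset.range N, hsWeight k s ((i : ℤ) + 1) :=
          Finset.sum_le_sum fun i _ => inv_two_mul_le_hsWeight hs i
      _ ≤ ∑ n ∈ Finset.Icc (-(N : ℤ)) N, hsWeight k s n :=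
          sum_range_le_sum_Icc_neg (hsWeight_nonneg k s) N
      _ ≤ 1 + ∑ n ∈ Finset.Icc (-(N : ℤ)) N, hsWeight k s n := le_add_of_nonneg_left zero_le_one
      _ ≤ ∏ n ∈ Finset.Icc (-(N : ℤ)) N, (1 + hsWeight k s n) :=
          one_add_sum_le_prod_one_add _ fun n _ => hsWeight_nonneg k s n
  simp_rw [Finset.prod_inv_distrib]
  exact tendsto_inv_atTop_zero.comp <| Filter.tendsto_atTop_mono hlower <|
    tendsto_sum_range_one_div_nat_succ_atTop.const_mul_atTop (by norm_num)

lemma measurable_hsNormTruncSq (s : ℝ) (N : ℕ) : Measurable (hsNormTruncSq s N) := by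
  unfold hsNormTruncSq
  fun_prop

lemma hsNormTruncSq_nonneg (s : ℝ) (N : ℕ) (ψ : ℤ → ℂ) : 0 ≤ hsNormTruncSq s N ψ :=
  Finset.sum_nonneg fun _ _ => by positivity

namespace IsGammaK

variable {k : ℕ} {γ : Measure (ℤ → ℂ)}

lemma integral_exp_neg_mul_norm_sq (hγ : IsGammaK k γ) (n : ℤ) {a : ℝ} (ha : 0 ≤ a) :
    ∫ ψ, exp (-(a * ‖ψ n‖ ^ 2)) ∂γ = (1 + a * (1 + (n : ℝ) ^ (2 * k))⁻¹)⁻¹ := by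
  have hvar : 0 ≤ (1 + (n : ℝ) ^ (2 * k))⁻¹ :=
    have := (even_two_mul k).pow_nonneg (n : ℝ)
    by positivity
  rw [← integral_map (φ := fun ψ : ℤ → ℂ => ψ n) (f := fun z : ℂ => exp (-(a * ‖z‖ ^ 2)))
    (measurable_pi_apply n).aemeasurable (by fun_prop), hγ.2.2 n,
    integral_exp_neg_mul_norm_sq_complexGaussian _ ha, coe_toNNReal _ hvar]

lemma mgf_hsNormTruncSq (hγ : IsGammaK k γ) (s : ℝ) (N : ℕ) :
    mgf (hsNormTruncSq s N) γ (-1) = ∏ n ∈ Finset.Icc (-(N : ℤ)) N, (1 + hsWeight k s n)⁻¹ := by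
  set X : ℤ → (ℤ → ℂ) → ℝ := fun n ψ => |(n : ℝ)| ^ (2 * s) * ‖ψ n‖ ^ 2
  have hsum : hsNormTruncSq s N = ∑ n ∈ Finset.Icc (-(N : ℤ)) N, X n := by
    ext ψ
    simp only [hsNormTruncSq, Finset.sum_apply, X]
  have hindep : iIndepFun X γ :=
    hγ.2.1.comp (fun n z => |(n : ℝ)| ^ (2 * s) * ‖z‖ ^ 2) fun n => by fun_prop
  rw [hsum, hindep.mgf_sum (fun n => by fun_prop)]
  refine Finset.prod_congr rfl fun n _ => ?_
  simp only [mgf, X, neg_one_mul, hsWeight]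
  exact hγ.integral_exp_neg_mul_norm_sq n (by positivity)

lemma measure_hsNormTruncSq_le_le (hγ : IsGammaK k γ) (s c : ℝ) (N : ℕ) :
    γ {ψ | hsNormTruncSq s N ψ ≤ c}
      ≤ ENNReal.ofReal (exp c * ∏ n ∈ Finset.Icc (-(N : ℤ)) N, (1 + hsWeight k s n)⁻¹) := by
  have := hγ.1
  have hint : Integrable (fun ψ => exp (-1 * hsNormTruncSq s N ψ)) γ := by
    refine Integrable.of_bound ((measurable_hsNormTruncSq s N).const_mul _).exp.aestronglyMeasurable
      1 (ae_of_all _ fun ψ => ?_)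
    rw [norm_of_nonneg (exp_nonneg _), exp_le_one_iff, neg_one_mul, neg_nonpos]
    exact hsNormTruncSq_nonneg s N ψ
  rw [← ofReal_measureReal]
  refine ENNReal.ofReal_le_ofReal ?_
  simpa [hγ.mgf_hsNormTruncSq] using measure_le_le_exp_mul_mgf c (by norm_num) hint

end IsGammaK

lemma measure_iInter_eq_zero_of_tendsto {α ι : Type*} [MeasurableSpace α] {μ : Measure α}
    {l : Filter ι} [l.NeBot] {s : ι → Set α} (h : Filter.Tendsto (fun i => μ (s i)) l (nhds 0)) :
    μ (⋂ i, s i) = 0 :=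
  le_antisymm (ge_of_tendsto' h fun i => measure_mono (Set.iInter_subset s i)) bot_le

/-- The Gaussian measure `γ_k` gives no mass to `Ḣ^s` for `s ≥ k − 1/2`:
the set of `ψ` with `Σ_n |n|^{2s}|ψ_n|² < ∞` is `γ_k`-null, and more precisely
`γ_k(‖ψ_N‖_{Ḣ^s} ≤ λ) → 0` as `N → ∞` for every `λ > 0`. -/
theorem gammaK_null_Hs (k : ℕ) (γ : Measure (ℤ → ℂ)) (hγ : IsGammaK k γ)
    (s : ℝ) (hs : (k : ℝ) - 1 / 2 ≤ s) :
    γ {ψ : ℤ → ℂ | Summable (fun n : ℤ => |(n : ℝ)| ^ (2 * s) * ‖ψ n‖ ^ 2)} = 0 ∧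
    ∀ l : ℝ, 0 < l →
      Filter.Tendsto (fun N : ℕ => γ {ψ | Real.sqrt (hsNormTruncSq s N ψ) ≤ l})
        Filter.atTop (nhds 0) := by
  have hsmall : ∀ l : ℝ, 0 < l →
      Filter.Tendsto (fun N : ℕ => γ {ψ | √(hsNormTruncSq s N ψ) ≤ l}) Filter.atTop (nhds 0) := by
    intro l hl
    have hbound := ENNReal.tendsto_ofReal
      ((tendsto_prod_inv_one_add_hsWeight hs).const_mul (exp (l ^ 2)))
    rw [mul_zero, ENNReal.ofReal_zero] at hbound
    refine tendsto_of_tendsto_of_tendsto_of_le_of_le tendsto_const_nhds hbound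
      (fun N => zero_le) fun N => (measure_mono fun ψ hψ => ?_).trans
        (hγ.measure_hsNormTruncSq_le_le s (l ^ 2) N)
    exact (sqrt_le_left hl.le).mp hψ
  refine ⟨measure_mono_null (fun ψ hψ => ?_) (measure_iUnion_null fun m : ℕ =>
    measure_iInter_eq_zero_of_tendsto (hsmall (m + 1) m.cast_add_one_pos)), hsmall⟩
  obtain ⟨m, hm⟩ := exists_nat_ge (√(∑' n : ℤ, |(n : ℝ)| ^ (2 * s) * ‖ψ n‖ ^ 2))
  refine Set.mem_iUnion.mpr ⟨m, Set.mem_iInter.mpr fun N => ?_⟩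
  have htrunc : hsNormTruncSq s N ψ ≤ ∑' n : ℤ, |(n : ℝ)| ^ (2 * s) * ‖ψ n‖ ^ 2 :=
    Summable.sum_le_tsum _ (fun n _ => by positivity) hψ
  exact (sqrt_le_sqrt htrunc).trans (hm.trans (lt_add_one _).le)
end

section
/- Let k ≥ 0 and γ_k the Gaussian measure with Fourier coefficients of variance (1+n^{2k})^{-1}. For every s < k − 1/2 there is a constant C such that for all λ > 0, γ_k(‖ψ‖_{Ḣ^s} ≥ λ) ≤ C e^{−λ/4}. Consequently γ_k is concentrated on ∩_{ε>0} Ḣ^{k−1/2−ε}(T), i.e. γ_k(∩_{ε>0} Ḣ^{k−1/2−ε}) = 1. -/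
open MeasureTheory ProbabilityTheory Real
open scoped NNReal ENNReal

/-!
With `a_n = |n|^{2s}` and `v_n = E|ψ_n|² = (1 + n^{2k})⁻¹`, each coefficient has
`E exp(a_n |ψ_n|² / 4) = (1 - a_n v_n / 4)⁻¹ ≤ exp(a_n v_n / 2)`, and `a_n v_n ≤ |n|^{-2(k-s)}` is
summable because `s < k - 1/2`. By independence every partial sum of `‖ψ‖²_{Ḣ^s}` has
exponential moment at most `exp(½ Σ a_n v_n)`, so Chernoff's bound gives a tail `C e^{-t/4}`
that is uniform over partial sums and hence passes to the full series. As `t → ∞` this makes the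
series converge almost surely; intersecting over `s = k - 1/2 - 1/(j+1)` gives the concentration.
-/

open Filter Topology

lemma lintegral_exp_mul_sq_gaussianReal {v : ℝ≥0} (hv : v ≠ 0) {c : ℝ} (hc : 2 * c * v < 1) :
    ∫⁻ x, ENNReal.ofReal (exp (c * x ^ 2)) ∂gaussianReal 0 v =
      ENNReal.ofReal (1 / √(1 - 2 * c * v)) := by
  have hv0 : (0 : ℝ) < v := NNReal.coe_pos.2 (pos_iff_ne_zero.2 hv)
  -- the integrand times the density is the Gaussian kernel `exp (-b x²)` with this `b`
  set b : ℝ := 1 / (2 * v) - c with hb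
  have hb0 : 0 < b := by
    rw [hb, sub_pos, lt_div_iff₀ (by positivity)]
    linarith
  have hbv : 2 * v * b = 1 - 2 * c * v := by
    rw [hb]; field_simp
  have hdensity : ∀ x : ℝ, (gaussianPDF 0 v * fun x => ENNReal.ofReal (exp (c * x ^ 2))) x =
      ENNReal.ofReal ((√(2 * π * v))⁻¹ * exp (-b * x ^ 2)) := by
    intro x
    simp only [Pi.mul_apply, gaussianPDF, gaussianPDFReal]
    rw [← ENNReal.ofReal_mul (by positivity), mul_assoc, ← exp_add, hb]
    congr 3
    field_simp
    ring
  rw [gaussianReal_of_var_ne_zero _ hv, lintegral_withDensity_eq_lintegral_mul _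
      (measurable_gaussianPDF _ _) (by fun_prop)]
  simp_rw [hdensity]
  rw [← ofReal_integral_eq_lintegral_ofReal ((integrable_exp_neg_mul_sq hb0).const_mul _)
      (.of_forall fun x => by positivity), integral_const_mul, integral_gaussian, ← hbv,
    show 2 * π * (v : ℝ) = π * (2 * v) by ring, sqrt_mul pi_pos.le, sqrt_div pi_pos.le,
    sqrt_mul (by positivity : (0 : ℝ) ≤ 2 * v)]
  have : 0 < √π := sqrt_pos.2 pi_pos
  have : 0 < √b := sqrt_pos.2 hb0
  have : 0 < √(2 * (v : ℝ)) := sqrt_pos.2 (by positivity)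
  field_simp

lemma lintegral_exp_mul_sq_norm_complexGaussian {v : ℝ≥0} (hv : v ≠ 0) {c : ℝ} (hc : c * v < 1) :
    ∫⁻ z, ENNReal.ofReal (exp (c * ‖z‖ ^ 2)) ∂complexGaussian v =
      ENNReal.ofReal (1 / (1 - c * v)) := by
  have hv2 : v / 2 ≠ 0 := div_ne_zero hv two_ne_zero
  have hc2 : 2 * c * (v / 2 : ℝ≥0) < 1 := by push_cast; linarith
  have hsplit : ∀ p : ℝ × ℝ, ENNReal.ofReal (exp (c * ‖(p.1 : ℂ) + p.2 * Complex.I‖ ^ 2)) =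
      ENNReal.ofReal (exp (c * p.1 ^ 2)) * ENNReal.ofReal (exp (c * p.2 ^ 2)) := by
    intro p
    rw [Complex.sq_norm, Complex.normSq_add_mul_I, mul_add, exp_add,
      ENNReal.ofReal_mul (by positivity)]
  rw [complexGaussian, lintegral_map (by fun_prop) (by fun_prop)]
  simp_rw [hsplit]
  rw [lintegral_prod_mul (f := fun x => ENNReal.ofReal (exp (c * x ^ 2)))
      (g := fun x => ENNReal.ofReal (exp (c * x ^ 2))) (by fun_prop) (by fun_prop),
    lintegral_exp_mul_sq_gaussianReal hv2 hc2, ← ENNReal.ofReal_mul (by positivity),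
    div_mul_div_comm, one_mul, mul_self_sqrt (by push_cast; linarith)]
  push_cast
  ring_nf

lemma one_div_one_sub_le_exp_two_mul {x : ℝ} (hx0 : 0 ≤ x) (hx : x ≤ 1 / 2) :
    1 / (1 - x) ≤ exp (2 * x) := by
  calc 1 / (1 - x) ≤ 2 * x + 1 := by
        rw [div_le_iff₀ (by linarith)]
        nlinarith
    _ ≤ exp (2 * x) := add_one_le_exp _

lemma lintegral_exp_mul_sq_norm_complexGaussian_le {v : ℝ≥0} (hv : v ≠ 0) {c : ℝ} (hc0 : 0 ≤ c)
    (hc : c * v ≤ 1 / 2) :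
    ∫⁻ z, ENNReal.ofReal (exp (c * ‖z‖ ^ 2)) ∂complexGaussian v ≤
      ENNReal.ofReal (exp (2 * (c * v))) := by
  rw [lintegral_exp_mul_sq_norm_complexGaussian hv (by linarith)]
  exact ENNReal.ofReal_le_ofReal (one_div_one_sub_le_exp_two_mul (by positivity) hc)

section ComplexGaussianFamily

variable {Ω ι : Type*} [MeasurableSpace Ω] {μ : Measure Ω} {X : ι → Ω → ℂ} {v : ι → ℝ≥0}
  {a : ι → ℝ}

lemma lintegral_exp_sum_mul_sq_norm_le (hX : iIndepFun X μ) (hXm : ∀ i, Measurable (X i))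
    (hlaw : ∀ i, μ.map (X i) = complexGaussian (v i)) (hv : ∀ i, v i ≠ 0) (ha : ∀ i, 0 ≤ a i)
    (hav : ∀ i, a i * v i ≤ 2) (u : Finset ι) :
    ∫⁻ ω, ENNReal.ofReal (exp ((∑ i ∈ u, a i * ‖X i ω‖ ^ 2) / 4)) ∂μ ≤
      ENNReal.ofReal (exp ((∑ i ∈ u, a i * v i) / 2)) := by
  set F : ι → Ω → ℝ≥0∞ := fun i ω => ENNReal.ofReal (exp (a i * ‖X i ω‖ ^ 2 / 4))
  have hF : iIndepFun F μ :=
    hX.comp (fun i z => ENNReal.ofReal (exp (a i * ‖z‖ ^ 2 / 4))) fun i => by fun_prop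
  have hfactor (i : ι) : ∫⁻ ω, F i ω ∂μ ≤ ENNReal.ofReal (exp (a i * v i / 2)) := by
    rw [← lintegral_map (f := fun z => ENNReal.ofReal (exp (a i * ‖z‖ ^ 2 / 4))) (by fun_prop)
      (hXm i), hlaw i]
    convert lintegral_exp_mul_sq_norm_complexGaussian_le (c := a i / 4) (hv i)
      (by linarith [ha i]) (by linarith [hav i]) using 4
    · rw [mul_div_right_comm]
    · ring
  calc ∫⁻ ω, ENNReal.ofReal (exp ((∑ i ∈ u, a i * ‖X i ω‖ ^ 2) / 4)) ∂μ
      = ∫⁻ ω, ∏ i ∈ u, F i ω ∂μ := by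
        congr with ω
        rw [← ENNReal.ofReal_prod_of_nonneg fun i _ => (exp_pos _).le, ← exp_sum, Finset.sum_div]
    _ = ∏ i ∈ u, ∫⁻ ω, F i ω ∂μ :=
        lintegral_prod_eq_prod_lintegral_of_indepFun u F hF fun i => by fun_prop
    _ ≤ ∏ i ∈ u, ENNReal.ofReal (exp (a i * v i / 2)) := Finset.prod_le_prod' fun i _ => hfactor i
    _ = ENNReal.ofReal (exp ((∑ i ∈ u, a i * v i) / 2)) := by
        rw [← ENNReal.ofReal_prod_of_nonneg fun i _ => (exp_pos _).le, ← exp_sum, Finset.sum_div]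

lemma measure_lt_sum_mul_sq_norm_le (hX : iIndepFun X μ) (hXm : ∀ i, Measurable (X i))
    (hlaw : ∀ i, μ.map (X i) = complexGaussian (v i)) (hv : ∀ i, v i ≠ 0) (ha : ∀ i, 0 ≤ a i)
    (hav : ∀ i, a i * v i ≤ 2) (u : Finset ι) (t : ℝ) :
    μ {ω | t < ∑ i ∈ u, a i * ‖X i ω‖ ^ 2} ≤
      ENNReal.ofReal (exp ((∑ i ∈ u, a i * v i) / 2 - t / 4)) := by
  have hsub : {ω | t < ∑ i ∈ u, a i * ‖X i ω‖ ^ 2} ⊆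
      {ω | ENNReal.ofReal (exp (t / 4)) ≤
        ENNReal.ofReal (exp ((∑ i ∈ u, a i * ‖X i ω‖ ^ 2) / 4))} := fun ω hω =>
    ENNReal.ofReal_le_ofReal (exp_le_exp.2 (by have : t < _ := hω; linarith))
  calc μ {ω | t < ∑ i ∈ u, a i * ‖X i ω‖ ^ 2}
      ≤ (∫⁻ ω, ENNReal.ofReal (exp ((∑ i ∈ u, a i * ‖X i ω‖ ^ 2) / 4)) ∂μ) /
          ENNReal.ofReal (exp (t / 4)) :=
        (measure_mono hsub).trans (meas_ge_le_lintegral_div (by fun_prop)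
          (by simp [exp_pos]) ENNReal.ofReal_ne_top)
    _ ≤ ENNReal.ofReal (exp ((∑ i ∈ u, a i * v i) / 2)) / ENNReal.ofReal (exp (t / 4)) :=
        ENNReal.div_le_div_right (lintegral_exp_sum_mul_sq_norm_le hX hXm hlaw hv ha hav u) _
    _ = ENNReal.ofReal (exp ((∑ i ∈ u, a i * v i) / 2 - t / 4)) := by
        rw [← ENNReal.ofReal_div_of_pos (exp_pos _), ← exp_sub]

lemma measure_iUnion_lt_sum_mul_sq_norm_le [Countable ι] (hX : iIndepFun X μ)
    (hXm : ∀ i, Measurable (X i)) (hlaw : ∀ i, μ.map (X i) = complexGaussian (v i))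
    (hv : ∀ i, v i ≠ 0) (ha : ∀ i, 0 ≤ a i) (hav : ∀ i, a i * v i ≤ 2)
    (hsum : Summable fun i => a i * v i) (t : ℝ) :
    μ (⋃ u : Finset ι, {ω | t < ∑ i ∈ u, a i * ‖X i ω‖ ^ 2}) ≤
      ENNReal.ofReal (exp ((∑' i, a i * v i) / 2 - t / 4)) := by
  have hmono : Monotone fun u : Finset ι => {ω | t < ∑ i ∈ u, a i * ‖X i ω‖ ^ 2} :=
    fun u u' huu' ω hω => hω.trans_le
      (Finset.sum_le_sum_of_subset_of_nonneg huu' fun i _ _ => mul_nonneg (ha i) (sq_nonneg _))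
  rw [hmono.directed_le.measure_iUnion]
  refine iSup_le fun u => (measure_lt_sum_mul_sq_norm_le hX hXm hlaw hv ha hav u t).trans ?_
  refine ENNReal.ofReal_le_ofReal (exp_le_exp.2 ?_)
  have := hsum.sum_le_tsum u fun i _ => mul_nonneg (ha i) (v i).coe_nonneg
  linarith

end ComplexGaussianFamily

lemma exists_finset_lt_sum_of_lt_tsum {ι : Type*} {f : ι → ℝ} (hf : 0 ≤ f) {t : ℝ}
    (ht : t < ∑' i, f i) : ∃ u : Finset ι, t < ∑ i ∈ u, f i := by
  by_contra! h
  exact ht.not_ge (Real.tsum_le_of_sum_le hf h)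

lemma exists_finset_lt_sum_of_not_summable {ι : Type*} {f : ι → ℝ} (hf : 0 ≤ f)
    (h : ¬Summable f) (t : ℝ) : ∃ u : Finset ι, t < ∑ i ∈ u, f i := by
  by_contra! h'
  exact h (summable_of_sum_le hf h')

lemma one_le_abs_intCast {n : ℤ} (hn : n ≠ 0) : 1 ≤ |(n : ℝ)| := by
  exact_mod_cast Int.one_le_abs hn

lemma rpow_mul_inv_one_add_pow_le {x : ℝ} (hx : 0 < x) (s : ℝ) (m : ℕ) :
    x ^ s * (1 + x ^ m)⁻¹ ≤ x ^ (s - m) := by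
  rw [rpow_sub hx, rpow_natCast, div_eq_mul_inv]
  gcongr
  linarith

lemma inv_one_add_pow_two_mul_pos (x : ℝ) (k : ℕ) : 0 < (1 + x ^ (2 * k))⁻¹ :=
  inv_pos.2 (by linarith [(even_two_mul k).pow_nonneg x])

lemma abs_intCast_rpow_mul_inv_one_add_pow_le {n : ℤ} (hn : n ≠ 0) (s : ℝ) (k : ℕ) :
    |(n : ℝ)| ^ s * (1 + (n : ℝ) ^ (2 * k))⁻¹ ≤ |(n : ℝ)| ^ (s - 2 * k) := by
  have := rpow_mul_inv_one_add_pow_le (abs_pos.2 (Int.cast_ne_zero.2 hn)) s (2 * k)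
  rwa [(even_two_mul k).pow_abs, Nat.cast_mul, Nat.cast_ofNat] at this

lemma abs_intCast_rpow_mul_inv_one_add_pow_le_one {s : ℝ} {k : ℕ} (hs : s ≤ 2 * k) (n : ℤ) :
    |(n : ℝ)| ^ s * (1 + (n : ℝ) ^ (2 * k))⁻¹ ≤ 1 := by
  rcases eq_or_ne n 0 with rfl | hn
  · refine mul_le_one₀ (by simpa using zero_rpow_le_one s) (inv_one_add_pow_two_mul_pos _ k).le
      (inv_le_one_of_one_le₀ ?_)
    simp
  · exact (abs_intCast_rpow_mul_inv_one_add_pow_le hn s k).trans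
      (rpow_le_one_of_one_le_of_nonpos (one_le_abs_intCast hn) (by linarith))

lemma summable_abs_intCast_rpow_mul_inv_one_add_pow {s : ℝ} {k : ℕ} (hs : s < k - 1 / 2) :
    Summable fun n : ℤ => |(n : ℝ)| ^ (2 * s) * (1 + (n : ℝ) ^ (2 * k))⁻¹ := by
  refine (summable_abs_int_rpow (b := 2 * k - 2 * s) (by linarith)).of_norm_bounded_eventually ?_
  filter_upwards [Filter.eventually_cofinite_ne 0] with n hn
  rw [norm_of_nonneg (mul_nonneg (by positivity) (inv_one_add_pow_two_mul_pos _ k).le)]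
  convert abs_intCast_rpow_mul_inv_one_add_pow_le hn (2 * s) k using 2
  ring

lemma Summable.abs_intCast_rpow_mul_of_exponent_le {s s' : ℝ} (hss' : s ≤ s') {f : ℤ → ℝ}
    (hf : 0 ≤ f) (h : Summable fun n : ℤ => |(n : ℝ)| ^ s' * f n) :
    Summable fun n : ℤ => |(n : ℝ)| ^ s * f n := by
  refine h.of_norm_bounded_eventually ?_
  filter_upwards [Filter.eventually_cofinite_ne 0] with n hn
  rw [norm_of_nonneg (mul_nonneg (rpow_nonneg (abs_nonneg _) _) (hf n))]
  exact mul_le_mul_of_nonneg_right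
    (rpow_le_rpow_of_exponent_le (one_le_abs_intCast hn) hss') (hf n)

namespace IsGammaK

variable {k : ℕ} {γ : Measure (ℤ → ℂ)}

lemma measure_iUnion_lt_sum_le (hγ : IsGammaK k γ) {s : ℝ} (hs : s < k - 1 / 2) :
    ∃ C : ℝ, 0 < C ∧ ∀ t : ℝ,
      γ (⋃ u : Finset ℤ, {ψ | t < ∑ n ∈ u, |(n : ℝ)| ^ (2 * s) * ‖ψ n‖ ^ 2}) ≤
        ENNReal.ofReal (C * exp (-t / 4)) := by
  obtain ⟨-, hindep, hlaw⟩ := hγ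
  set v : ℤ → ℝ≥0 := fun n => ((1 + (n : ℝ) ^ (2 * k))⁻¹).toNNReal
  have hv (n : ℤ) : (v n : ℝ) = (1 + (n : ℝ) ^ (2 * k))⁻¹ :=
    Real.coe_toNNReal _ (inv_one_add_pow_two_mul_pos _ k).le
  refine ⟨exp ((∑' n : ℤ, |(n : ℝ)| ^ (2 * s) * v n) / 2), exp_pos _, fun t => ?_⟩
  have hbound := measure_iUnion_lt_sum_mul_sq_norm_le (v := v)
    (a := fun n : ℤ => |(n : ℝ)| ^ (2 * s)) hindep measurable_pi_apply hlaw
    (fun n => (Real.toNNReal_pos.2 (inv_one_add_pow_two_mul_pos _ k)).ne')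
    (fun n => rpow_nonneg (abs_nonneg _) _)
    (fun n => by
      rw [hv]
      exact (abs_intCast_rpow_mul_inv_one_add_pow_le_one (by linarith) n).trans one_le_two)
    (by simpa only [hv] using summable_abs_intCast_rpow_mul_inv_one_add_pow hs) t
  rwa [sub_eq_add_neg, exp_add, ← neg_div] at hbound

lemma ae_summable (hγ : IsGammaK k γ) {s : ℝ} (hs : s < k - 1 / 2) :
    ∀ᵐ ψ ∂γ, Summable fun n : ℤ => |(n : ℝ)| ^ (2 * s) * ‖ψ n‖ ^ 2 := by
  obtain ⟨C, -, hC⟩ := hγ.measure_iUnion_lt_sum_le hs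
  have hle (t : ℝ) : γ {ψ | ¬Summable fun n : ℤ => |(n : ℝ)| ^ (2 * s) * ‖ψ n‖ ^ 2} ≤
      ENNReal.ofReal (C * exp (-t / 4)) :=
    (measure_mono fun ψ hψ => Set.mem_iUnion.2 <|
      exists_finset_lt_sum_of_not_summable (fun n => by positivity) hψ t).trans (hC t)
  have hlim : Tendsto (fun t : ℝ => ENNReal.ofReal (C * exp (-t / 4))) atTop (𝓝 0) := by
    simpa using ENNReal.tendsto_ofReal
      ((tendsto_exp_atBot.comp (tendsto_neg_atTop_atBot.atBot_div_const four_pos)).const_mul C)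
  exact ae_iff.2 (nonpos_iff_eq_zero.1 (ge_of_tendsto' hlim hle))

end IsGammaK

/-- Proposition A.1 / Lemma A.3: for `s < k − 1/2` the `Ḣ^s` norm has exponential
tails under `γ_k`, and consequently `γ_k` is concentrated on
`⋂_{ε>0} Ḣ^{k−1/2−ε}`. -/
theorem gammaK_concentration (k : ℕ) (γ : Measure (ℤ → ℂ)) (hγ : IsGammaK k γ) :
    (∀ s : ℝ, s < (k : ℝ) - 1 / 2 → ∃ C : ℝ, 0 < C ∧ ∀ l : ℝ, 0 < l →
      γ {ψ : ℤ → ℂ |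
          l ≤ Real.sqrt (∑' n : ℤ, |(n : ℝ)| ^ (2 * s) * ‖ψ n‖ ^ 2)} ≤
        ENNReal.ofReal (C * Real.exp (-l / 4))) ∧
    γ (⋂ ε > (0:ℝ), {ψ : ℤ → ℂ |
        Summable (fun n : ℤ => |(n : ℝ)| ^ (2 * ((k : ℝ) - 1 / 2 - ε)) * ‖ψ n‖ ^ 2)}) = 1 := by
  refine ⟨fun s hs => ?_, ?_⟩
  · obtain ⟨C, hC, hbound⟩ := hγ.measure_iUnion_lt_sum_le hs
    refine ⟨C * exp (1 / 4), by positivity, fun l hl => ?_⟩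
    -- `l ≤ √S` gives `l - 1 < l² ≤ S`, which some finite partial sum already sees
    have hsub : {ψ : ℤ → ℂ | l ≤ √(∑' n : ℤ, |(n : ℝ)| ^ (2 * s) * ‖ψ n‖ ^ 2)} ⊆
        ⋃ u : Finset ℤ, {ψ | l - 1 < ∑ n ∈ u, |(n : ℝ)| ^ (2 * s) * ‖ψ n‖ ^ 2} := fun ψ hψ =>
      Set.mem_iUnion.2 <| exists_finset_lt_sum_of_lt_tsum (fun n => by positivity) <| by
        have := (le_sqrt hl.le (tsum_nonneg fun n => by positivity)).1 hψ
        nlinarith [sq_nonneg (l - 1 / 2)]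
    calc _ ≤ _ := measure_mono hsub
      _ ≤ _ := hbound (l - 1)
      _ = ENNReal.ofReal (C * exp (1 / 4) * exp (-l / 4)) := by
        rw [mul_assoc, ← exp_add]
        ring_nf
  · have hae : ∀ᵐ ψ ∂γ, ∀ j : ℕ, Summable fun n : ℤ =>
        |(n : ℝ)| ^ (2 * ((k : ℝ) - 1 / 2 - 1 / (j + 1))) * ‖ψ n‖ ^ 2 :=
      ae_all_iff.2 fun j => hγ.ae_summable (by linarith [(by positivity : (0 : ℝ) < 1 / (j + 1))])
    have hmem : ∀ᵐ ψ ∂γ, ψ ∈ ⋂ ε > (0:ℝ), {ψ : ℤ → ℂ |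
        Summable (fun n : ℤ => |(n : ℝ)| ^ (2 * ((k : ℝ) - 1 / 2 - ε)) * ‖ψ n‖ ^ 2)} := by
      filter_upwards [hae] with ψ hψ
      simp only [Set.mem_iInter]
      intro ε hε
      obtain ⟨j, hj⟩ := exists_nat_one_div_lt hε
      exact (hψ j).abs_intCast_rpow_mul_of_exponent_le (by linarith) fun n => sq_nonneg _
    have := hγ.1
    exact (measure_congr (ae_eq_univ.2 (mem_ae_iff.1 hmem))).trans measure_univ
end
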